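/- arXiv:2605.23589 — 3 statements merged into one kernel-verified Lean document; each statement's English description precedes it below -/
import Mathlib

section
/- Suppose the full-scale storage dynamics hold: e^s_{n,t+1} = e^s_{n,t} + (ηᶜ_n·pᶜ_{n,t} − ηᵈ_n·pᵈ_{n,t})·Δ for every storage unit n and every t ∈ {0,…,T−2}. Given a consecutive clustering with first indices t_0 = 0 < t_1 < … < t_{K−1}, define ê^s_{n,k} := e^s_{n,t_k}, p̂ᶜ_{n,k} := (1/T_k)·Σ_{t∈T_k} pᶜ_{n,t}, and p̂ᵈ_{n,k} := (1/T_k)·Σ_{t∈T_k} pᵈ_{n,t}. Then the aggregated storage dynamics hold: ê^s_{n,k+1} = ê^s_{n,k} + (ηᶜ_n·p̂ᶜ_{n,k} − ηᵈ_n·p̂ᵈ_{n,k})·T_k·Δ for every n and every k ∈ {0,…,K−2}. -/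
open Finset

/-- A consecutive clustering (partition of {0,…,T−1} into K nonempty intervals of
consecutive indices), encoded by the first indices `start k` of the clusters. -/
structure ConsecClustering (T K : ℕ) where
  start : ℕ → ℕ
  start_zero : start 0 = 0
  start_last : start K = T
  start_lt : ∀ k < K, start k < start (k + 1)

/-- Number of time steps T_k in cluster k. -/
def ConsecClustering.Tk {T K : ℕ} (c : ConsecClustering T K) (k : ℕ) : ℕ :=
  c.start (k + 1) - c.start k

/-- The set of (consecutive) time steps assigned to cluster k. -/
def ConsecClustering.cluster {T K : ℕ} (c : ConsecClustering T K) (k : ℕ) :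
    Finset ℕ :=
  Finset.Ico (c.start k) (c.start (k + 1))

lemma ConsecClustering.start_strictMonoOn {T K : ℕ} (c : ConsecClustering T K) :
    ∀ a b, a < b → b ≤ K → c.start a < c.start b := by
  intro a b hab hbK
  induction b with
  | zero => omega
  | succ b ih =>
    have hb : c.start b < c.start (b + 1) := c.start_lt b (by omega)
    rcases Nat.lt_or_ge a b with h | h
    · exact lt_trans (ih h (by omega)) hb
    · have : a = b := by omega
      subst this; exact hb

/-- If the full-scale storage dynamics hold at every time step, then
with ê^s_{n,k} := e^s at the first index of cluster k and p̂ᶜ, p̂ᵈ the cluster averages,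
the aggregated storage dynamics ê^s_{n,k+1} = ê^s_{n,k} + (ηᶜ p̂ᶜ − ηᵈ p̂ᵈ)·T_k·Δ hold
for every storage unit n and every cluster k ∈ {0,…,K−2}. -/
theorem aggregated_storage_dynamics
    {N : Type} [Fintype N] (T K : ℕ) (hT : 1 ≤ T)
    (delta : ℝ) (hdelta : 0 < delta) (etac etad : N → ℝ)
    (es pc pd : N → ℕ → ℝ)
    (c : ConsecClustering T K)
    (hdyn : ∀ n, ∀ t, t + 1 < T →
      es n (t + 1) = es n t + (etac n * pc n t - etad n * pd n t) * delta) :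
    ∀ n, ∀ k, k + 1 < K →
      es n (c.start (k + 1)) = es n (c.start k)
        + (etac n * ((∑ t ∈ c.cluster k, pc n t) / (c.Tk k : ℝ))
            - etad n * ((∑ t ∈ c.cluster k, pd n t) / (c.Tk k : ℝ)))
          * (c.Tk k : ℝ) * delta := by
  intro n k hk
  set a := c.start k with ha
  set b := c.start (k + 1) with hb
  have hab : a < b := c.start_lt k (by omega)
  have hbT : b ≤ T := by
    rcases Nat.lt_or_ge (k + 1) K with h | h
    · exact le_of_lt (by rw [← c.start_last]; exact c.start_strictMonoOn _ _ h le_rfl)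
    · have : k + 1 = K := by omega
      rw [hb, this, c.start_last]
  have key : ∀ m, a + m ≤ b →
      es n (a + m) = es n a
        + (∑ t ∈ Finset.Ico a (a + m), (etac n * pc n t - etad n * pd n t)) * delta := by
    intro m
    induction m with
    | zero => intro _; simp
    | succ m ih =>
      intro hm
      have hm' : a + m ≤ b := by omega
      have ht : a + m + 1 < T := by
        have : b < T := by
          rw [← c.start_last]
          exact c.start_strictMonoOn (k + 1) K hk le_rfl
        omega
      have h1 : a + (m + 1) = (a + m) + 1 := by omega
      rw [h1, hdyn n (a + m) ht, ih hm',
        Finset.sum_Ico_succ_top (by omega : a ≤ a + m)]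
      ring
  have hTk : a + c.Tk k = b := by
    have : c.Tk k = b - a := rfl
    omega
  have hTkpos : (0 : ℝ) < (c.Tk k : ℝ) := by
    have : 0 < c.Tk k := by
      have : c.Tk k = b - a := rfl
      omega
    exact_mod_cast this
  have hmain := key (c.Tk k) (by omega)
  rw [hTk] at hmain
  have hclus : c.cluster k = Finset.Ico a b := rfl
  rw [hmain, hclus]
  rw [Finset.sum_sub_distrib, ← Finset.mul_sum, ← Finset.mul_sum]
  have hne : (c.Tk k : ℝ) ≠ 0 := ne_of_gt hTkpos
  field_simp
end

section
/- If z is feasible for the full-scale GEP model, then its aggregation ẑ (defined by x̂ᵍ = xᵍ, x̂ˢ = xˢ, b̂ᵍ = bᵍ, b̂ˢ = bˢ, p̂ᵍ_{g,k} = (1/T_k)·Σ_{t∈T_k} pᵍ_{g,t}, p̂ᶜ_{n,k} = (1/T_k)·Σ_{t∈T_k} pᶜ_{n,t}, p̂ᵈ_{n,k} = (1/T_k)·Σ_{t∈T_k} pᵈ_{n,t}, ê^ns_k = (1/T_k)·Σ_{t∈T_k} e^ns_t, and ê^s_{n,k} = e^s_{n,t_k} with t_k the first index of T_k) is feasible for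 the temporally aggregated GEP model built from the same clustering. -/
open Finset

/-- Data of the full-scale GEP model. -/
structure GEPData (G N : Type) where
  /-- sampling time Δ (h) -/
  delta : ℝ
  /-- capacity factors F_{g,t} -/
  F : G → ℕ → ℝ
  /-- energy demand D_t -/
  D : ℕ → ℝ
  /-- operational cost of generator g -/
  Cpg : G → ℝ
  /-- charging cost of storage n -/
  Cpc : N → ℝ
  /-- discharging cost of storage n -/
  Cpd : N → ℝ
  /-- cost of non-supplied energy -/
  Cns : ℝ
  /-- investment cost of generator g -/
  Cginv : G → ℝ
  /-- investment cost of storage n -/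
  Csinv : N → ℝ
  /-- charging efficiency -/
  etac : N → ℝ
  /-- discharging efficiency -/
  etad : N → ℝ
  /-- energy-to-power ratio -/
  Tn : N → ℝ
  /-- initial stored energy -/
  E0 : N → ℝ
  /-- minimum generator capacity -/
  Xgl : G → ℝ
  /-- maximum generator capacity -/
  Xgu : G → ℝ
  /-- minimum storage capacity -/
  Xsl : N → ℝ
  /-- maximum storage capacity -/
  Xsu : N → ℝ

/-- Decision variables of the (full-scale or aggregated) GEP model; time-indexed
variables are functions on ℕ, constrained only on the relevant horizon. -/
structure GEPVars (G N : Type) where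
  xg : G → ℝ
  xs : N → ℝ
  bg : G → ℝ
  bs : N → ℝ
  pg : G → ℕ → ℝ
  es : N → ℕ → ℝ
  pc : N → ℕ → ℝ
  pd : N → ℕ → ℝ
  ens : ℕ → ℝ

/-- Feasibility for the full-scale GEP model over horizon {0,…,T−1}. -/
def Feasible {G N : Type} [Fintype G] [Fintype N]
    (d : GEPData G N) (T : ℕ) (z : GEPVars G N) : Prop :=
  (∀ g, z.bg g = 0 ∨ z.bg g = 1) ∧
  (∀ n, z.bs n = 0 ∨ z.bs n = 1) ∧
  (∀ t < T, ∑ g : G, z.pg g t * d.delta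
      + ∑ n : N, (z.pd n t - z.pc n t) * d.delta + z.ens t = d.D t) ∧
  (∀ n, ∀ t, t + 1 < T →
      z.es n (t + 1) = z.es n t
        + (d.etac n * z.pc n t - d.etad n * z.pd n t) * d.delta) ∧
  (∀ n, z.es n 0 = d.E0 n) ∧
  (∀ g, ∀ t < T, 0 ≤ z.pg g t ∧ z.pg g t ≤ d.F g t * z.xg g) ∧
  (∀ n, ∀ t < T, 0 ≤ z.es n t ∧ z.es n t ≤ z.xs n * d.delta) ∧
  (∀ n, ∀ t < T, 0 ≤ z.pc n t ∧ z.pc n t ≤ z.xs n * d.delta / d.Tn n) ∧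
  (∀ n, ∀ t < T, 0 ≤ z.pd n t ∧ z.pd n t ≤ z.xs n * d.delta / d.Tn n) ∧
  (∀ n, z.bs n * d.Xsl n ≤ z.xs n ∧ z.xs n ≤ z.bs n * d.Xsu n) ∧
  (∀ g, z.bg g * d.Xgl g ≤ z.xg g ∧ z.xg g ≤ z.bg g * d.Xgu g) ∧
  (∀ t < T, 0 ≤ z.ens t)

/-- Objective function J of the full-scale GEP model. -/
noncomputable def objJ {G N : Type} [Fintype G] [Fintype N]
    (d : GEPData G N) (T : ℕ) (z : GEPVars G N) : ℝ :=
  ∑ g : G, d.Cginv g * z.xg g + ∑ n : N, d.Csinv n * z.xs n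
    + ∑ t ∈ Finset.range T, ∑ g : G, d.Cpg g * z.pg g t * d.delta
    + ∑ t ∈ Finset.range T,
        (∑ n : N, (d.Cpc n * z.pc n t + d.Cpd n * z.pd n t) * d.delta
          + d.Cns * z.ens t)

/-- Aggregated capacity factor F̂_{g,k}. -/
noncomputable def Fhat {G N : Type} (d : GEPData G N) {T K : ℕ} (c : ConsecClustering T K)
    (g : G) (k : ℕ) : ℝ :=
  (∑ t ∈ c.cluster k, d.F g t) / (c.Tk k : ℝ)

/-- Aggregated demand D̂_k. -/
noncomputable def Dhat {G N : Type} (d : GEPData G N) {T K : ℕ} (c : ConsecClustering T K)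
    (k : ℕ) : ℝ :=
  (∑ t ∈ c.cluster k, d.D t) / (c.Tk k : ℝ)

/-- Feasibility for the temporally aggregated GEP model over clusters {0,…,K−1}. -/
def AggFeasible {G N : Type} [Fintype G] [Fintype N]
    (d : GEPData G N) {T K : ℕ} (c : ConsecClustering T K) (z : GEPVars G N) :
    Prop :=
  (∀ g, z.bg g = 0 ∨ z.bg g = 1) ∧
  (∀ n, z.bs n = 0 ∨ z.bs n = 1) ∧
  (∀ k < K, ∑ g : G, z.pg g k * d.delta
      + ∑ n : N, (z.pd n k - z.pc n k) * d.delta + z.ens k = Dhat d c k) ∧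
  (∀ n, ∀ k, k + 1 < K →
      z.es n (k + 1) = z.es n k
        + (d.etac n * z.pc n k - d.etad n * z.pd n k) * (c.Tk k : ℝ) * d.delta) ∧
  (∀ n, z.es n 0 = d.E0 n) ∧
  (∀ g, ∀ k < K, 0 ≤ z.pg g k ∧ z.pg g k ≤ Fhat d c g k * z.xg g) ∧
  (∀ n, ∀ k < K, 0 ≤ z.es n k ∧ z.es n k ≤ z.xs n * d.delta) ∧
  (∀ n, ∀ k < K, 0 ≤ z.pc n k ∧ z.pc n k ≤ z.xs n * d.delta / d.Tn n) ∧
  (∀ n, ∀ k < K, 0 ≤ z.pd n k ∧ z.pd n k ≤ z.xs n * d.delta / d.Tn n) ∧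
  (∀ n, z.bs n * d.Xsl n ≤ z.xs n ∧ z.xs n ≤ z.bs n * d.Xsu n) ∧
  (∀ g, z.bg g * d.Xgl g ≤ z.xg g ∧ z.xg g ≤ z.bg g * d.Xgu g) ∧
  (∀ k < K, 0 ≤ z.ens k)

/-- Objective function Ĵ of the temporally aggregated GEP model. -/
noncomputable def objJagg {G N : Type} [Fintype G] [Fintype N]
    (d : GEPData G N) {T K : ℕ} (c : ConsecClustering T K) (z : GEPVars G N) :
    ℝ :=
  ∑ g : G, d.Cginv g * z.xg g + ∑ n : N, d.Csinv n * z.xs n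
    + ∑ k ∈ Finset.range K, (c.Tk k : ℝ) *
        (∑ g : G, d.Cpg g * z.pg g k * d.delta
          + ∑ n : N, (d.Cpc n * z.pc n k + d.Cpd n * z.pd n k) * d.delta
          + d.Cns * z.ens k)

/-- The aggregation ẑ of a full-scale assignment z: investment variables are kept,
time-indexed operational variables are averaged over each cluster, and the stored
energy is sampled at the first index of each cluster. -/
noncomputable def aggregate {G N : Type} {T K : ℕ} (c : ConsecClustering T K)
    (z : GEPVars G N) : GEPVars G N where
  xg := z.xg
  xs := z.xs
  bg := z.bg
  bs := z.bs
  pg := fun g k => (∑ t ∈ c.cluster k, z.pg g t) / (c.Tk k : ℝ)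
  es := fun n k => z.es n (c.start k)
  pc := fun n k => (∑ t ∈ c.cluster k, z.pc n t) / (c.Tk k : ℝ)
  pd := fun n k => (∑ t ∈ c.cluster k, z.pd n t) / (c.Tk k : ℝ)
  ens := fun k => (∑ t ∈ c.cluster k, z.ens t) / (c.Tk k : ℝ)

lemma ConsecClustering.start_mono {T K : ℕ} (c : ConsecClustering T K) :
    ∀ j ≤ K, ∀ i ≤ j, c.start i ≤ c.start j := by
  intro j hj
  induction j with
  | zero =>
    intro i hi
    have : i = 0 := Nat.le_zero.mp hi
    simp [this]
  | succ j ih =>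
    intro i hi
    rcases Nat.lt_or_ge i (j + 1) with h | h
    · exact le_trans (ih (by omega) i (by omega)) (le_of_lt (c.start_lt j (by omega)))
    · have : i = j + 1 := by omega
      simp [this]

lemma ConsecClustering.start_le_T {T K : ℕ} (c : ConsecClustering T K)
    {k : ℕ} (h : k ≤ K) : c.start k ≤ T := by
  have := c.start_mono K le_rfl k h
  rwa [c.start_last] at this

lemma ConsecClustering.Tk_pos {T K : ℕ} (c : ConsecClustering T K)
    {k : ℕ} (h : k < K) : 0 < c.Tk k := by
  have := c.start_lt k h
  unfold ConsecClustering.Tk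
  omega

lemma ConsecClustering.mem_cluster_lt {T K : ℕ} (c : ConsecClustering T K)
    {k t : ℕ} (hk : k < K) (ht : t ∈ c.cluster k) : t < T := by
  rw [ConsecClustering.cluster, Finset.mem_Ico] at ht
  have h1 : c.start (k + 1) ≤ T := c.start_le_T hk
  omega

lemma tele_sum (e f : ℕ → ℝ) (T a : ℕ)
    (h : ∀ t, t + 1 < T → e (t + 1) = e t + f t) :
    ∀ m, a + m < T → e (a + m) = e a + ∑ t ∈ Finset.Ico a (a + m), f t := by
  intro m
  induction m with
  | zero => simp
  | succ m ih =>
    intro hm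
    have h1 : a + (m + 1) = (a + m) + 1 := by omega
    rw [h1, h (a + m) (by omega), ih (by omega),
      Finset.sum_Ico_succ_top (by omega : a ≤ a + m)]
    ring

/-- If z is feasible for the full-scale GEP model, then its
aggregation ẑ is feasible for the temporally aggregated GEP model built from the same
consecutive clustering. -/
theorem aggregation_preserves_feasibility
    {G N : Type} [Fintype G] [Fintype N] (d : GEPData G N) (T K : ℕ)
    (hT : 1 ≤ T) (hdelta : 0 < d.delta) (hTn : ∀ n, 0 < d.Tn n)
    (hXg : ∀ g, d.Xgl g ≤ d.Xgu g) (hXs : ∀ n, d.Xsl n ≤ d.Xsu n)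
    (c : ConsecClustering T K) (z : GEPVars G N)
    (hz : Feasible d T z) :
    AggFeasible d c (aggregate c z) := by
  obtain ⟨hbg, hbs, hbal, hdyn, hinit, hpg, hes, hpc, hpd, hxs, hxg, hens⟩ := hz
  have hTkpos : ∀ k < K, (0 : ℝ) < (c.Tk k : ℝ) := fun k hk =>
    Nat.cast_pos.mpr (c.Tk_pos hk)
  have hcard : ∀ k, (c.cluster k).card = c.Tk k := by
    intro k
    rw [ConsecClustering.cluster, Nat.card_Ico]
    rfl
  refine ⟨hbg, hbs, ?_, ?_, ?_, ?_, ?_, ?_, ?_, hxs, hxg, ?_⟩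
  · -- power balance
    intro k hk
    have hTk := hTkpos k hk
    have hb : ∑ t ∈ c.cluster k, (∑ g : G, z.pg g t * d.delta
        + ∑ n : N, (z.pd n t - z.pc n t) * d.delta + z.ens t)
        = ∑ t ∈ c.cluster k, d.D t :=
      Finset.sum_congr rfl fun t ht => hbal t (c.mem_cluster_lt hk ht)
    show ∑ g : G, (∑ t ∈ c.cluster k, z.pg g t) / (c.Tk k : ℝ) * d.delta
        + ∑ n : N, ((∑ t ∈ c.cluster k, z.pd n t) / (c.Tk k : ℝ)
            - (∑ t ∈ c.cluster k, z.pc n t) / (c.Tk k : ℝ)) * d.delta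
        + (∑ t ∈ c.cluster k, z.ens t) / (c.Tk k : ℝ) = Dhat d c k
    rw [Dhat]
    simp only [div_mul_eq_mul_div, ← sub_div, ← Finset.sum_div, ← add_div]
    congr 1
    rw [← hb]
    simp only [Finset.sum_add_distrib, Finset.sum_mul, ← Finset.sum_sub_distrib,
      sub_mul]
    rw [Finset.sum_comm (s := c.cluster k), Finset.sum_comm (s := c.cluster k)
      (f := fun t n => z.pd n t * d.delta - z.pc n t * d.delta)]
  · -- storage dynamics
    intro n k hk
    have hTk := hTkpos k (by omega)
    have hstart : c.start k + c.Tk k = c.start (k + 1) := by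
      have := c.start_lt k (by omega)
      unfold ConsecClustering.Tk
      omega
    have hlt : c.start (k + 1) < T := by
      have h1 : c.start (k + 1) < c.start (k + 2) := c.start_lt (k + 1) hk
      have h2 : c.start (k + 2) ≤ T := c.start_le_T (by omega)
      omega
    have := tele_sum (z.es n)
      (fun t => (d.etac n * z.pc n t - d.etad n * z.pd n t) * d.delta) T
      (c.start k) (hdyn n) (c.Tk k) (by omega)
    rw [hstart] at this
    show z.es n (c.start (k + 1)) = z.es n (c.start k)
        + (d.etac n * ((∑ t ∈ c.cluster k, z.pc n t) / (c.Tk k : ℝ))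
            - d.etad n * ((∑ t ∈ c.cluster k, z.pd n t) / (c.Tk k : ℝ)))
          * (c.Tk k : ℝ) * d.delta
    rw [this]
    have hcl : c.cluster k = Finset.Ico (c.start k) (c.start (k + 1)) := rfl
    rw [hcl, ← hstart]
    congr 1
    have hrhs : (d.etac n * ((∑ t ∈ Finset.Ico (c.start k) (c.start k + c.Tk k),
          z.pc n t) / (c.Tk k : ℝ))
        - d.etad n * ((∑ t ∈ Finset.Ico (c.start k) (c.start k + c.Tk k),
          z.pd n t) / (c.Tk k : ℝ))) * (c.Tk k : ℝ) * d.delta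
        = (d.etac n * (∑ t ∈ Finset.Ico (c.start k) (c.start k + c.Tk k), z.pc n t)
          - d.etad n * (∑ t ∈ Finset.Ico (c.start k) (c.start k + c.Tk k),
            z.pd n t)) * d.delta := by
      field_simp
    rw [hrhs, ← Finset.sum_mul]
    congr 1
    simp [Finset.sum_sub_distrib, Finset.mul_sum]
  · -- initial energy
    intro n
    show z.es n (c.start 0) = d.E0 n
    rw [c.start_zero]
    exact hinit n
  · -- generator power bounds
    intro g k hk
    have hTk := hTkpos k hk
    constructor
    · exact div_nonneg (Finset.sum_nonneg fun t ht =>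
        (hpg g t (c.mem_cluster_lt hk ht)).1) hTk.le
    · show (∑ t ∈ c.cluster k, z.pg g t) / (c.Tk k : ℝ) ≤ Fhat d c g k * z.xg g
      rw [Fhat, div_mul_eq_mul_div, div_le_div_iff_of_pos_right hTk, Finset.sum_mul]
      exact Finset.sum_le_sum fun t ht => (hpg g t (c.mem_cluster_lt hk ht)).2
  · -- stored energy bounds
    intro n k hk
    have hlt : c.start k < T := by
      have h1 := c.start_lt k hk
      have h2 : c.start (k + 1) ≤ T := c.start_le_T hk
      omega
    exact hes n (c.start k) hlt
  · -- charging power bounds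
    intro n k hk
    have hTk := hTkpos k hk
    constructor
    · exact div_nonneg (Finset.sum_nonneg fun t ht =>
        (hpc n t (c.mem_cluster_lt hk ht)).1) hTk.le
    · show (∑ t ∈ c.cluster k, z.pc n t) / (c.Tk k : ℝ)
          ≤ z.xs n * d.delta / d.Tn n
      rw [div_le_iff₀ hTk]
      calc ∑ t ∈ c.cluster k, z.pc n t
          ≤ ∑ _t ∈ c.cluster k, z.xs n * d.delta / d.Tn n :=
            Finset.sum_le_sum fun t ht => (hpc n t (c.mem_cluster_lt hk ht)).2
        _ = z.xs n * d.delta / d.Tn n * (c.Tk k : ℝ) := by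
            rw [Finset.sum_const, hcard, nsmul_eq_mul, mul_comm]
  · -- discharging power bounds
    intro n k hk
    have hTk := hTkpos k hk
    constructor
    · exact div_nonneg (Finset.sum_nonneg fun t ht =>
        (hpd n t (c.mem_cluster_lt hk ht)).1) hTk.le
    · show (∑ t ∈ c.cluster k, z.pd n t) / (c.Tk k : ℝ)
          ≤ z.xs n * d.delta / d.Tn n
      rw [div_le_iff₀ hTk]
      calc ∑ t ∈ c.cluster k, z.pd n t
          ≤ ∑ _t ∈ c.cluster k, z.xs n * d.delta / d.Tn n :=
            Finset.sum_le_sum fun t ht => (hpd n t (c.mem_cluster_lt hk ht)).2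
        _ = z.xs n * d.delta / d.Tn n * (c.Tk k : ℝ) := by
            rw [Finset.sum_const, hcard, nsmul_eq_mul, mul_comm]
  · -- non-supplied energy
    intro k hk
    exact div_nonneg (Finset.sum_nonneg fun t ht =>
      hens t (c.mem_cluster_lt hk ht)) (hTkpos k hk).le
end

section
/- Disaggregation under cluster-constant inputs: consider a consecutive clustering such that the input time series are constant within each cluster, i.e., F_{g,t} = F̂_{g,k} and D_t = D̂_k for every k and every t ∈ T_k, and such that the last cluster is a singleton (|T_{K−1}| = 1). Then for every feasible solution ẑ of the aggregated GEP model, the disaggregated point z defined by xᵍ = x̂ᵍ, xˢ = x̂ˢ, bᵍ = b̂ᵍ, bˢ = b̂ˢ, pᵍ_{g,t} = p̂ᵍ_{g,k}, pᶜ_{n,t} = p̂ᶜ_{n,k}, pᵈ_{n,t} = p̂ᵈ_{n,k}, e^ns_t = ê^ns_k for t ∈ T_k, and e^s_{n,t} = ê^s_{n,k} + (t − t_k)·(ηᶜ_n p̂ᶜ_{n,k} − ηᵈ_n p̂ᵈ_{n,k})·Δ for t ∈ T_k (t_k the first index of T_k), is feasible for the full-scale GEP model and satisfies J(z) = Ĵ(ẑ).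 -/
open Finset

/-- The index of the cluster containing time step t: the largest k < K whose first
index is ≤ t. -/
def ConsecClustering.idx {T K : ℕ} (c : ConsecClustering T K) (t : ℕ) : ℕ :=
  ((Finset.range K).filter (fun k => c.start k ≤ t)).sup id

/-- The disaggregation z of an aggregated point ẑ: investment variables are kept,
operational power/non-supplied-energy variables are held constant at the cluster
value, and the stored energy evolves linearly within each cluster starting from the
cluster value. -/
noncomputable def disaggregate {G N : Type} (d : GEPData G N) {T K : ℕ}
    (c : ConsecClustering T K) (w : GEPVars G N) : GEPVars G N where
  xg := w.xg
  xs := w.xs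
  bg := w.bg
  bs := w.bs
  pg := fun g t => w.pg g (c.idx t)
  pc := fun n t => w.pc n (c.idx t)
  pd := fun n t => w.pd n (c.idx t)
  ens := fun t => w.ens (c.idx t)
  es := fun n t =>
    w.es n (c.idx t)
      + ((t : ℝ) - (c.start (c.idx t) : ℝ))
        * (d.etac n * w.pc n (c.idx t) - d.etad n * w.pd n (c.idx t)) * d.delta

namespace ConsecClustering

variable {T K : ℕ} (c : ConsecClustering T K)

lemma start_mono_s10 {a b : ℕ} (hab : a ≤ b) (hbK : b ≤ K) :
    c.start a ≤ c.start b := by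
  induction b with
  | zero => simp [Nat.le_zero.mp hab]
  | succ b ih =>
    rcases Nat.lt_or_ge a (b + 1) with h | h
    · exact (ih (by omega) (by omega)).trans (c.start_lt b (by omega)).le
    · have : a = b + 1 := by omega
      simp [this]

lemma start_strict_mono {a b : ℕ} (hab : a < b) (hbK : b ≤ K) :
    c.start a < c.start b := by
  have h1 : c.start a ≤ c.start (b - 1) := c.start_mono_s10 (by omega) (by omega)
  have h2 : c.start (b - 1) < c.start (b - 1 + 1) := c.start_lt _ (by omega)
  have hb : b - 1 + 1 = b := by omega
  rw [hb] at h2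
  omega

lemma mem_cluster {k t : ℕ} :
    t ∈ c.cluster k ↔ c.start k ≤ t ∧ t < c.start (k + 1) := Finset.mem_Ico

lemma exists_cluster {t : ℕ} (ht : t < T) : ∃ k < K, t ∈ c.cluster k := by
  have main : ∀ m, m ≤ K → t < c.start m → ∃ k < m, t ∈ c.cluster k := by
    intro m
    induction m with
    | zero => intro _ h; rw [c.start_zero] at h; omega
    | succ m ih =>
      intro hm h
      rcases Nat.lt_or_ge t (c.start m) with h' | h'
      · obtain ⟨k, hk, hmem⟩ := ih (by omega) h'
        exact ⟨k, by omega, hmem⟩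
      · exact ⟨m, by omega, c.mem_cluster.2 ⟨h', h⟩⟩
  exact main K le_rfl (by rw [c.start_last]; exact ht)

lemma idx_eq {k t : ℕ} (hk : k < K) (ht : t ∈ c.cluster k) : c.idx t = k := by
  obtain ⟨h1, h2⟩ := c.mem_cluster.1 ht
  apply le_antisymm
  · apply Finset.sup_le
    intro j hj
    simp only [Finset.mem_filter, Finset.mem_range] at hj
    simp only [id_eq]
    by_contra hjk
    have : c.start (k + 1) ≤ c.start j := c.start_mono_s10 (by omega) (by omega)
    omega
  · exact Finset.le_sup (f := id)
      (by simp only [Finset.mem_filter, Finset.mem_range]; exact ⟨hk, h1⟩)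

lemma idx_spec {t : ℕ} (ht : t < T) :
    c.idx t < K ∧ t ∈ c.cluster (c.idx t) := by
  obtain ⟨k, hk, hmem⟩ := c.exists_cluster ht
  rw [c.idx_eq hk hmem]; exact ⟨hk, hmem⟩

lemma Tk_pos_s10 {k : ℕ} (hk : k < K) : 0 < c.Tk k := by
  have := c.start_lt k hk; unfold ConsecClustering.Tk; omega

lemma card_cluster (k : ℕ) : (c.cluster k).card = c.Tk k := Nat.card_Ico _ _

lemma sum_clusters (hT : c.start K = T) (f : ℕ → ℝ) :
    ∑ t ∈ Finset.range T, f t = ∑ k ∈ Finset.range K, ∑ t ∈ c.cluster k, f t := by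
  have main : ∀ m, m ≤ K →
      ∑ t ∈ Finset.range (c.start m), f t
        = ∑ k ∈ Finset.range m, ∑ t ∈ c.cluster k, f t := by
    intro m
    induction m with
    | zero => simp [c.start_zero]
    | succ m ih =>
      intro hm
      rw [Finset.sum_range_succ, ← ih (by omega), Finset.range_eq_Ico, Finset.range_eq_Ico]
      show _ = _ + ∑ t ∈ Finset.Ico (c.start m) (c.start (m + 1)), f t
      exact (Finset.sum_Ico_consecutive f (Nat.zero_le _)
        (c.start_mono_s10 (Nat.le_succ m) hm)).symm
  have h := main K le_rfl
  rwa [hT] at h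

end ConsecClustering

/-- Disaggregation under cluster-constant inputs: if the input time
series are constant within each cluster (F_{g,t} = F̂_{g,k} and D_t = D̂_k on cluster
k) and the last cluster is a singleton, then the disaggregation of any feasible
solution ẑ of the aggregated GEP model is feasible for the full-scale GEP model and
has the same objective value: J(z) = Ĵ(ẑ). -/
theorem disaggregation_feasible_and_cost_preserving
    {G N : Type} [Fintype G] [Fintype N] (d : GEPData G N) (T K : ℕ)
    (hT : 1 ≤ T) (hK : 1 ≤ K) (hdelta : 0 < d.delta) (hTn : ∀ n, 0 < d.Tn n)
    (hXg : ∀ g, d.Xgl g ≤ d.Xgu g) (hXs : ∀ n, d.Xsl n ≤ d.Xsu n)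
    (c : ConsecClustering T K)
    (hF : ∀ g, ∀ k < K, ∀ t ∈ c.cluster k, d.F g t = Fhat d c g k)
    (hD : ∀ k < K, ∀ t ∈ c.cluster k, d.D t = Dhat d c k)
    (hlast : c.Tk (K - 1) = 1)
    (w : GEPVars G N) (hw : AggFeasible d c w) :
    Feasible d T (disaggregate d c w) ∧
      objJ d T (disaggregate d c w) = objJagg d c w := by
  obtain ⟨hbg, hbs, hbal, hdyn, hinit, hpg, hes, hpc, hpd, hxs, hxg, hens⟩ := hw
  constructor
  · refine ⟨hbg, hbs, ?_, ?_, ?_, ?_, ?_, ?_, ?_, hxs, hxg, ?_⟩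
    · -- demand balance
      intro t ht
      obtain ⟨hk, hmem⟩ := c.idx_spec ht
      simp only [disaggregate]
      rw [hD (c.idx t) hk t hmem]
      exact hbal (c.idx t) hk
    · -- storage dynamics
      intro n t ht
      have ht' : t < T := by omega
      obtain ⟨hk, hmem⟩ := c.idx_spec ht'
      set k := c.idx t with hkdef
      obtain ⟨h1, h2⟩ := c.mem_cluster.1 hmem
      simp only [disaggregate]
      rcases Nat.lt_or_ge (t + 1) (c.start (k + 1)) with hcase | hcase
      · have hidx : c.idx (t + 1) = k :=
          c.idx_eq hk (c.mem_cluster.2 ⟨by omega, hcase⟩)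
        rw [hidx]
        push_cast
        ring
      · have heq : t + 1 = c.start (k + 1) := by omega
        have hkK : k + 1 < K := by
          rcases Nat.lt_or_ge (k + 1) K with h | h
          · exact h
          · exfalso
            have hk1 : k + 1 = K := by omega
            have hTe : c.start (k + 1) = T := by rw [hk1, c.start_last]
            omega
        have hidx : c.idx (t + 1) = k + 1 := by
          apply c.idx_eq hkK
          refine c.mem_cluster.2 ⟨by omega, ?_⟩
          have := c.start_lt (k + 1) hkK
          omega
        rw [hidx, hdyn n k hkK]
        have hTk : (c.Tk k : ℝ) = (c.start (k + 1) : ℝ) - (c.start k : ℝ) := by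
          simp only [ConsecClustering.Tk]
          rw [Nat.cast_sub (c.start_lt k hk).le]
        have hc1 : (t : ℝ) + 1 = (c.start (k + 1) : ℝ) := by exact_mod_cast heq
        push_cast
        rw [hTk, ← hc1]
        ring
    · -- initial stored energy
      intro n
      simp only [disaggregate]
      have h01 : (0 : ℕ) ∈ c.cluster 0 := by
        refine c.mem_cluster.2 ⟨by rw [c.start_zero], ?_⟩
        have := c.start_lt 0 (by omega)
        omega
      have h0 : c.idx 0 = 0 := c.idx_eq (by omega) h01
      rw [h0, c.start_zero]
      simp [hinit n]
    · -- generation bounds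
      intro g t ht
      obtain ⟨hk, hmem⟩ := c.idx_spec ht
      simp only [disaggregate]
      rw [hF g (c.idx t) hk t hmem]
      exact hpg g (c.idx t) hk
    · -- stored energy bounds
      intro n t ht
      obtain ⟨hk, hmem⟩ := c.idx_spec ht
      set k := c.idx t with hkdef
      obtain ⟨h1, h2⟩ := c.mem_cluster.1 hmem
      simp only [disaggregate]
      obtain ⟨ha0, ha1⟩ := hes n k hk
      rcases Nat.lt_or_ge (k + 1) K with hkK | hkK
      · obtain ⟨hb0, hb1⟩ := hes n (k + 1) hkK
        have hdynk := hdyn n k hkK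
        have hTkpos : (0 : ℝ) < (c.Tk k : ℝ) := by exact_mod_cast c.Tk_pos_s10 hk
        have hTk : (c.Tk k : ℝ) = (c.start (k + 1) : ℝ) - (c.start k : ℝ) := by
          simp only [ConsecClustering.Tk]
          rw [Nat.cast_sub (c.start_lt k hk).le]
        set lam : ℝ := ((t : ℝ) - (c.start k : ℝ)) / (c.Tk k : ℝ) with hlam
        have hl0 : 0 ≤ lam := by
          apply div_nonneg _ hTkpos.le
          have : (c.start k : ℝ) ≤ (t : ℝ) := by exact_mod_cast h1
          linarith
        have hl1 : lam ≤ 1 := by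
          rw [hlam, div_le_one hTkpos, hTk]
          have : (t : ℝ) + 1 ≤ (c.start (k + 1) : ℝ) := by exact_mod_cast h2
          linarith
        have hval : w.es n k + ((t : ℝ) - (c.start k : ℝ))
              * (d.etac n * w.pc n k - d.etad n * w.pd n k) * d.delta
            = w.es n k + lam * (w.es n (k + 1) - w.es n k) := by
          rw [hdynk, hlam]
          field_simp
          ring
        rw [hval]
        constructor
        · nlinarith [mul_nonneg (sub_nonneg.2 hl1) ha0, mul_nonneg hl0 hb0]
        · nlinarith [mul_le_mul_of_nonneg_left ha1 (sub_nonneg.2 hl1),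
            mul_le_mul_of_nonneg_left hb1 hl0]
      · -- last cluster, singleton
        have hkeq : k = K - 1 := by omega
        have hTk1 : c.Tk k = 1 := by rw [hkeq]; exact hlast
        have hss : c.start (k + 1) = c.start k + 1 := by
          have hlt := c.start_lt k hk
          simp only [ConsecClustering.Tk] at hTk1
          omega
        have hts : t = c.start k := by omega
        rw [← hkdef, hts]
        simp only [sub_self, zero_mul, add_zero]
        exact ⟨ha0, ha1⟩
    · -- charging bounds
      intro n t ht
      obtain ⟨hk, _⟩ := c.idx_spec ht
      simp only [disaggregate]
      exact hpc n (c.idx t) hk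
    · -- discharging bounds
      intro n t ht
      obtain ⟨hk, _⟩ := c.idx_spec ht
      simp only [disaggregate]
      exact hpd n (c.idx t) hk
    · -- non-supplied energy
      intro t ht
      obtain ⟨hk, _⟩ := c.idx_spec ht
      simp only [disaggregate]
      exact hens (c.idx t) hk
  · -- objective values coincide
    have hgen : ∑ t ∈ Finset.range T, ∑ g : G, d.Cpg g * w.pg g (c.idx t) * d.delta
        = ∑ k ∈ Finset.range K,
            (c.Tk k : ℝ) * ∑ g : G, d.Cpg g * w.pg g k * d.delta := by
      rw [c.sum_clusters c.start_last]
      refine Finset.sum_congr rfl fun k hk => ?_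
      rw [Finset.mem_range] at hk
      have hconst : ∀ t ∈ c.cluster k,
          ∑ g : G, d.Cpg g * w.pg g (c.idx t) * d.delta
            = ∑ g : G, d.Cpg g * w.pg g k * d.delta := by
        intro t ht
        rw [c.idx_eq hk ht]
      rw [Finset.sum_congr rfl hconst, Finset.sum_const, c.card_cluster,
        nsmul_eq_mul]
    have hsto : ∑ t ∈ Finset.range T,
          (∑ n : N, (d.Cpc n * w.pc n (c.idx t) + d.Cpd n * w.pd n (c.idx t))
              * d.delta + d.Cns * w.ens (c.idx t))
        = ∑ k ∈ Finset.range K,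
            (c.Tk k : ℝ) * (∑ n : N,
              (d.Cpc n * w.pc n k + d.Cpd n * w.pd n k) * d.delta
              + d.Cns * w.ens k) := by
      rw [c.sum_clusters c.start_last]
      refine Finset.sum_congr rfl fun k hk => ?_
      rw [Finset.mem_range] at hk
      have hconst : ∀ t ∈ c.cluster k,
          (∑ n : N, (d.Cpc n * w.pc n (c.idx t) + d.Cpd n * w.pd n (c.idx t))
              * d.delta + d.Cns * w.ens (c.idx t))
            = (∑ n : N, (d.Cpc n * w.pc n k + d.Cpd n * w.pd n k) * d.delta
              + d.Cns * w.ens k) := by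
        intro t ht
        rw [c.idx_eq hk ht]
      rw [Finset.sum_congr rfl hconst, Finset.sum_const, c.card_cluster,
        nsmul_eq_mul]
    unfold objJ objJagg
    simp only [disaggregate]
    rw [hgen, hsto, add_assoc, ← Finset.sum_add_distrib]
    congr 1
    exact Finset.sum_congr rfl fun k _ => by ring
end
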